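/- Let F = (λ, f) ∈ GT and m = (λ−1)/2 ∈ Ẑ. Let G be a profinite group and let x, y, z ∈ G be such that the product xyz commutes with each of x, y and z. Then f(x,y) x^m f(z,x) z^m f(y,z) y^m = (xyz)^m in G. -/

import Mathlib

/-! # Common setup: profinite groups, Ẑ, free profinite F₂, profinite completions,
the Grothendieck–Teichmüller group, braid groups and mapping class groups. -/

universe u

/-- A (topological) group is profinite if it is a compact, Hausdorff, totally
disconnected topological group. -/
class IsProfiniteGroup (G : Type) [Group G] [TopologicalSpace G] : Prop extends
    IsTopologicalGroup G, CompactSpace G, T2Space G, TotallyDisconnectedSpace G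

/-- A model of Ẑ, the profinite completion of ℤ: a profinite commutative topological
ring whose underlying additive profinite group is the free profinite group on the
single (topological) generator `1`. These properties characterize Ẑ uniquely. -/
structure ZhatModel : Type 1 where
  R : Type
  [commRing : CommRing R]
  [top : TopologicalSpace R]
  [topRing : IsTopologicalRing R]
  [cpt : CompactSpace R]
  [t2 : T2Space R]
  [td : TotallyDisconnectedSpace R]
  free : ∀ (G : Type) [Group G] [TopologicalSpace G] [IsProfiniteGroup G] (a : G),
    ∃! φ : ContinuousMonoidHom (Multiplicative R) G,
      φ (Multiplicative.ofAdd (1 : R)) = a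

attribute [instance] ZhatModel.commRing ZhatModel.top ZhatModel.topRing
  ZhatModel.cpt ZhatModel.t2 ZhatModel.td

/-- `Z.pow a l` is the profinite power `a ^ l` for `l ∈ Ẑ`: the image of `l` under
the unique continuous homomorphism `Ẑ → G` sending `1` to `a`. -/
noncomputable def ZhatModel.pow (Z : ZhatModel) {G : Type} [Group G] [TopologicalSpace G]
    [IsProfiniteGroup G] (a : G) (l : Z.R) : G :=
  (Z.free G a).exists.choose (Multiplicative.ofAdd l)

/-- A model of the free profinite group `F̂₂` on two generators `x`, `y`. -/
structure F2Model : Type 1 where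
  F : Type
  [grp : Group F]
  [top : TopologicalSpace F]
  [pro : IsProfiniteGroup F]
  x : F
  y : F
  free : ∀ (G : Type) [Group G] [TopologicalSpace G] [IsProfiniteGroup G] (a b : G),
    ∃! φ : ContinuousMonoidHom F G, φ x = a ∧ φ y = b

attribute [instance] F2Model.grp F2Model.top F2Model.pro

/-- `F2.eval f a b` is `f(a,b)`: the image of `f ∈ F̂₂` under the unique continuous
homomorphism `F̂₂ → G` with `x ↦ a`, `y ↦ b`. -/
noncomputable def F2Model.eval (F2 : F2Model) {G : Type} [Group G] [TopologicalSpace G]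
    [IsProfiniteGroup G] (f : F2.F) (a b : G) : G :=
  (F2.free G a b).exists.choose f

/-- A model of the profinite completion of a (discrete) group `B`: a profinite group
`C` together with a homomorphism `ι : B → C` such that every homomorphism from `B`
to a profinite group extends uniquely to a continuous homomorphism on `C`.  This
universal property characterizes the profinite completion uniquely. -/
structure ProfiniteCompletionModel (B : Type) [Group B] : Type 1 where
  C : Type
  [grp : Group C]
  [top : TopologicalSpace C]
  [pro : IsProfiniteGroup C]
  ι : B →* C
  free : ∀ (H : Type) [Group H] [TopologicalSpace H] [IsProfiniteGroup H] (ψ : B →* H),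
    ∃! φ : ContinuousMonoidHom C H, ∀ b, φ (ι b) = ψ b

attribute [instance] ProfiniteCompletionModel.grp ProfiniteCompletionModel.top
  ProfiniteCompletionModel.pro

/-! ## Generic words in a group -/

section Words

variable {G : Type*} [Group G]

/-- `genY b k = b (k-1) ⋯ b 2 (b 1)² b 2 ⋯ b (k-1)` (equal to `1` for `k ≤ 1`). -/
def genY (b : ℕ → G) : ℕ → G
  | 0 => 1
  | 1 => 1
  | 2 => b 1 * b 1
  | (k+3) => b (k+2) * genY b (k+2) * b (k+2)

/-- `genProd b k = b 1 * b 2 * ⋯ * b k`. -/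
def genProd (b : ℕ → G) : ℕ → G
  | 0 => 1
  | (k+1) => genProd b k * b (k+1)

/-- `genW b k = (b 1 ⋯ b (k-1))^k`. -/
def genW (b : ℕ → G) (k : ℕ) : G := (genProd b (k-1))^k

end Words

/-! ## Braid groups -/

/-- Braid relations on `n` generators (indexed by `Fin n`, where index `i`
stands for `σ_{i+1}`). -/
def braidRels (n : ℕ) : Set (FreeGroup (Fin n)) :=
  {r | (∃ i j : Fin n, (i : ℕ) + 1 = (j : ℕ) ∧
          r = FreeGroup.of i * FreeGroup.of j * FreeGroup.of i *
              (FreeGroup.of j * FreeGroup.of i * FreeGroup.of j)⁻¹) ∨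
       (∃ i j : Fin n, (i : ℕ) + 2 ≤ (j : ℕ) ∧
          r = FreeGroup.of i * FreeGroup.of j * (FreeGroup.of j * FreeGroup.of i)⁻¹)}

/-- The Artin braid group `B_n` on `n` strands, with the `n-1` generators
`σ_1, …, σ_{n-1}`. -/
abbrev BraidGroup (n : ℕ) : Type := PresentedGroup (braidRels (n-1))

/-- The generator `σ_i` of the braid group `B_n` (junk value `1` when `i` is
out of range). -/
def σB (n : ℕ) (i : ℕ) : BraidGroup n :=
  if h : 1 ≤ i ∧ i < n then PresentedGroup.of (⟨i - 1, by omega⟩ : Fin (n-1)) else 1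

/-- `η_i = σ_{i-1} ⋯ σ₂ σ₁² σ₂ ⋯ σ_{i-1}` in `B_n`. -/
def ηB (n : ℕ) (i : ℕ) : BraidGroup n := genY (σB n) i

/-- `ω_i = (σ₁ ⋯ σ_{i-1})^i` in `B_n`. -/
def ωB (n : ℕ) (i : ℕ) : BraidGroup n := genW (σB n) i

/-! ## The Grothendieck-Teichmüller group -/

/-- The standard generators of the pure braid group `P₄ ⊂ B₄`, in the order
`x₁₂, x₁₃, x₁₄, x₂₃, x₂₄, x₃₄`. -/
def xGen : Fin 6 → BraidGroup 4 :=
  ![(σB 4 1)^2,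
    σB 4 2 * (σB 4 1)^2 * (σB 4 2)⁻¹,
    σB 4 3 * σB 4 2 * (σB 4 1)^2 * (σB 4 2)⁻¹ * (σB 4 3)⁻¹,
    (σB 4 2)^2,
    σB 4 3 * (σB 4 2)^2 * (σB 4 3)⁻¹,
    (σB 4 3)^2]

/-- The pure braid group `P₄` as a subgroup of `B₄`. -/
def P4 : Subgroup (BraidGroup 4) := Subgroup.closure (Set.range xGen)

/-- The generators `x_{ij}` as elements of `P₄`. -/
def xP (k : Fin 6) : P4 := ⟨xGen k, Subgroup.subset_closure (Set.mem_range_self k)⟩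

/-- The pair `(l, f)` belongs to the Grothendieck–Teichmüller group `GT`:
`l ∈ Ẑ×`, `l - 1 ∈ 2Ẑ`, `f` lies in the closure of the commutator subgroup of
`F̂₂` and the relations (I), (II), (III) hold. -/
def IsGT (Z : ZhatModel) (F2 : F2Model) (l : Z.R) (f : F2.F) : Prop :=
  IsUnit l ∧ (∃ m : Z.R, l - 1 = 2 * m) ∧
  f ∈ (commutator F2.F).topologicalClosure ∧
  -- (I)
  F2.eval f F2.x F2.y * F2.eval f F2.y F2.x = 1 ∧
  -- (II)
  (∀ m : Z.R, l - 1 = 2 * m →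
    F2.eval f (F2.x * F2.y)⁻¹ F2.x * Z.pow ((F2.x * F2.y)⁻¹) m *
      F2.eval f F2.y ((F2.x * F2.y)⁻¹) * Z.pow F2.y m *
      F2.eval f F2.x F2.y * Z.pow F2.x m = 1) ∧
  -- (III), in (any model of) the profinite completion of the pure braid group P₄
  (∀ CP : ProfiniteCompletionModel P4,
    F2.eval f (CP.ι (xP 0)) (CP.ι (xP 3) * CP.ι (xP 4)) *
      F2.eval f (CP.ι (xP 1) * CP.ι (xP 3)) (CP.ι (xP 5)) =
    F2.eval f (CP.ι (xP 3)) (CP.ι (xP 5)) *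
      F2.eval f (CP.ι (xP 0) * CP.ι (xP 1)) (CP.ι (xP 4) * CP.ι (xP 5)) *
      F2.eval f (CP.ι (xP 0)) (CP.ι (xP 3)))
/-! ## Words for the mapping class group -/

section MCGWords

variable {G : Type*} [Group G] (d : G) (a : ℕ → G)

/-- `t_k = a_{2k} a_{2k-1} a_{2k+1} a_{2k}`. -/
def tA (k : ℕ) : G := a (2*k) * a (2*k - 1) * a (2*k + 1) * a (2*k)

/-- `d' = y₅ d y₅⁻¹`. -/
def dpA : G := genY a 5 * d * (genY a 5)⁻¹

/-- `d₃ = (t₁⁻¹t₂⁻¹ d t₂t₁)(t₂⁻¹ d t₂) d a₁⁻¹ a₃⁻¹ a₅⁻¹`. -/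
def d3A : G :=
  ((tA a 1)⁻¹ * (tA a 2)⁻¹ * d * tA a 2 * tA a 1) * ((tA a 2)⁻¹ * d * tA a 2) * d *
    (a 1)⁻¹ * (a 3)⁻¹ * (a 5)⁻¹

/-- The element `t₂t₁t₃t₂`. -/
def tfour : G := tA a 2 * tA a 1 * tA a 3 * tA a 2

/-- The relator expressing relation (C'): `d'` commutes with `(t₂t₁t₃t₂) d (t₂t₁t₃t₂)⁻¹`. -/
def relCpA : G :=
  dpA d a * (tfour a * d * (tfour a)⁻¹) * (dpA d a)⁻¹ * (tfour a * d * (tfour a)⁻¹)⁻¹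

/-- `v₁ = d'`, `v_i = (t_{i-1} t_i) v_{i-1} (t_{i-1} t_i)⁻¹`. -/
def vA : ℕ → G
  | 0 => 1
  | 1 => dpA d a
  | (i+2) => (tA a (i+1) * tA a (i+2)) * vA (i+1) * (tA a (i+1) * tA a (i+2))⁻¹

/-- `u_i = a_{2i} a_{2i+1} a_{2i+2} v_i (a_{2i+2} a_{2i+1} a_{2i} a_{2i-1})⁻¹`. -/
def uA (i : ℕ) : G :=
  a (2*i) * a (2*i+1) * a (2*i+2) * vA d a i *
    (a (2*i+2) * a (2*i+1) * a (2*i) * a (2*i - 1))⁻¹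

/-- `d_g = (u₁⋯u_{g-1})⁻¹ a₁ (u₁⋯u_{g-1})`. -/
def dgA (g : ℕ) : G :=
  (genProd (uA d a) (g-1))⁻¹ * a 1 * genProd (uA d a) (g-1)

/-- The relator of relation (D): `y_{2g+1} d_g y_{2g+1}⁻¹ = d_g`. -/
def relDA (g : ℕ) : G :=
  genY a (2*g+1) * dgA d a g * (genY a (2*g+1))⁻¹ * (dgA d a g)⁻¹

/-- `genProd2 b k = b 2 * b 3 * ⋯ * b k`. -/
def genProd2 (b : ℕ → G) : ℕ → G
  | 0 => 1
  | 1 => 1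
  | (k+2) => genProd2 b (k+1) * b (k+2)

/-- `TTA a i = (t₂⋯t_i)·(t₁⋯t_{i-1})`. -/
def TTA (i : ℕ) : G := genProd2 (tA a) i * genProd (tA a) (i-1)

/-- The sequence `d₁ = a₁`, `d₂ = d`,
`d_{i+1} = a_{2i+1}⁻¹ a_{2i-1}⁻¹ d_{i-1}⁻¹ g_{2,i} g_{1,i} d_i`
where `g_{1,i} = t_i⁻¹ d_i t_i` and `g_{2,i} = (t₂⋯t_i t₁⋯t_{i-1})⁻¹ d (t₂⋯t_i t₁⋯t_{i-1})`. -/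
def dSeq : ℕ → G
  | 0 => 1
  | 1 => a 1
  | 2 => d
  | (i+3) =>
    (a (2*(i+2)+1))⁻¹ * (a (2*(i+2) - 1))⁻¹ * (dSeq (i+1))⁻¹ *
      ((TTA a (i+2))⁻¹ * d * TTA a (i+2)) *
      ((tA a (i+2))⁻¹ * dSeq (i+2) * tA a (i+2)) * dSeq (i+2)

/-- `g_{1,i} = t_i⁻¹ d_i t_i`. -/
def g1A (i : ℕ) : G := (tA a i)⁻¹ * dSeq d a i * tA a i

/-- `g_{2,i} = (t₂⋯t_i · t₁⋯t_{i-1})⁻¹ d (t₂⋯t_i · t₁⋯t_{i-1})`. -/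
def g2A (i : ℕ) : G := (TTA a i)⁻¹ * d * TTA a i

/-- `d′_i = y_{2i+1} d_i y_{2i+1}⁻¹`. -/
def dpSeq (i : ℕ) : G := genY a (2*i+1) * dSeq d a i * (genY a (2*i+1))⁻¹

/-- `g′_{1,i} = t_i⁻¹ d′_i t_i`. -/
def g1pA (i : ℕ) : G := (tA a i)⁻¹ * dpSeq d a i * tA a i

/-- `g′_{2,i} = (t₂⋯t_i · t₁⋯t_{i-1})⁻¹ d′ (t₂⋯t_i · t₁⋯t_{i-1})`. -/
def g2pA (i : ℕ) : G := (TTA a i)⁻¹ * dpA d a * TTA a i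

/-- `W_k = (t₁⋯t_{k-1})^k`. -/
def WWA (k : ℕ) : G := genW (tA a) k

/-- `Y_k = t_{k-1}⋯t₂t₁²t₂⋯t_{k-1}`. -/
def YYA (k : ℕ) : G := genY (tA a) k

end MCGWords

/-! ## The Wajnryb presentation of the mapping class group `Γ_{g,1}` -/

/-- The free-group generator `d`. -/
def dF (g : ℕ) : FreeGroup (Fin (2*g+1)) := FreeGroup.of ⟨0, by omega⟩

/-- The free-group generators `a_i`, `1 ≤ i ≤ 2g` (junk value `1` out of range). -/
def aF (g : ℕ) (i : ℕ) : FreeGroup (Fin (2*g+1)) :=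
  if h : 1 ≤ i ∧ i ≤ 2*g then FreeGroup.of ⟨i, by omega⟩ else 1

/-- The relators of the Wajnryb presentation of `Γ_{g,1}`: relations (A), (B),
(C) (when `g ≥ 3`) and (C') (when `g ≥ 4`). -/
def mcgRels (g : ℕ) : Set (FreeGroup (Fin (2*g+1))) :=
  {r | (∃ i : ℕ, 1 ≤ i ∧ i + 1 ≤ 2*g ∧
          r = aF g i * aF g (i+1) * aF g i * (aF g (i+1) * aF g i * aF g (i+1))⁻¹) ∨
       (∃ i j : ℕ, 1 ≤ i ∧ j ≤ 2*g ∧ i + 2 ≤ j ∧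
          r = aF g i * aF g j * (aF g j * aF g i)⁻¹) ∨
       (r = dF g * aF g 4 * dF g * (aF g 4 * dF g * aF g 4)⁻¹) ∨
       (∃ j : ℕ, 1 ≤ j ∧ j ≤ 2*g ∧ j ≠ 4 ∧
          r = dF g * aF g j * (aF g j * dF g)⁻¹) ∨
       (r = dF g * dpA (dF g) (aF g) * ((aF g 1 * aF g 2 * aF g 3)^4)⁻¹) ∨
       (3 ≤ g ∧ r = d3A (dF g) (aF g) * aF g 6 * d3A (dF g) (aF g) *
          (aF g 6 * d3A (dF g) (aF g) * aF g 6)⁻¹) ∨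
       (4 ≤ g ∧ r = relCpA (dF g) (aF g))}

/-- The mapping class group `Γ_{g,1}` of a genus-`g` surface with one marked point,
via its Wajnryb presentation. -/
abbrev Gamma1 (g : ℕ) : Type := PresentedGroup (mcgRels g)

/-- The generator `d` of `Γ_{g,1}`. -/
def dM (g : ℕ) : Gamma1 g := PresentedGroup.of ⟨0, by omega⟩

/-- The generators `a_i` of `Γ_{g,1}` (junk value `1` out of range). -/
def aM (g : ℕ) (i : ℕ) : Gamma1 g :=
  if h : 1 ≤ i ∧ i ≤ 2*g then PresentedGroup.of ⟨i, by omega⟩ else 1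

/-- The mapping class group `Γ_{g,0}` of a closed genus-`g` surface, obtained from the
Wajnryb presentation of `Γ_{g,1}` by adding the single relation (D). -/
abbrev Gamma0 (g : ℕ) : Type :=
  PresentedGroup (mcgRels g ∪ {relDA (dF g) (aF g) g})

/-- The generator `d` of `Γ_{g,0}`. -/
def dM0 (g : ℕ) : Gamma0 g := PresentedGroup.of ⟨0, by omega⟩

/-- The generators `a_i` of `Γ_{g,0}` (junk value `1` out of range). -/
def aM0 (g : ℕ) (i : ℕ) : Gamma0 g :=
  if h : 1 ≤ i ∧ i ≤ 2*g then PresentedGroup.of ⟨i, by omega⟩ else 1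

/-! Transporting relation (II) along the continuous homomorphism `F̂₂ → G` with `x ↦ x`,
`y ↦ y` gives the hexagon with `w = (xy)⁻¹` in place of `z`. Now `z = w c` with
`c = xyz` commuting with `x`, `y`, `w`. Since `f` lies in the closure of the commutator
subgroup, `f(a c, b) = f(a, b)` whenever `c` commutes with `a` and `b`: the homomorphism
`x ↦ a c, y ↦ b` is the pointwise product of `x ↦ a, y ↦ b` and `x ↦ c, y ↦ 1`, and the
latter has abelian image, so it kills `f`. Finally `z^m = w^m c^m`, and `c^m` commutes with
`f(y, w) y^m`, so it can be moved to the end. -/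

section Homs

variable {A G : Type} [Group A] [TopologicalSpace A] [Group G] [TopologicalSpace G]

variable [IsTopologicalGroup G] in
def ContinuousMonoidHom.conj (g : G) : ContinuousMonoidHom G G where
  toFun h := g * h * g⁻¹
  map_one' := by group
  map_mul' u v := by group
  continuous_toFun := by fun_prop

variable [IsTopologicalGroup G] in
@[simp]
lemma ContinuousMonoidHom.conj_apply (g h : G) : ContinuousMonoidHom.conj g h = g * h * g⁻¹ :=
  rfl

variable [IsTopologicalGroup G] in
def ContinuousMonoidHom.mulOfCommute (φ ψ : ContinuousMonoidHom A G)
    (h : ∀ u v, Commute (φ u) (ψ v)) : ContinuousMonoidHom A G where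
  toFun u := φ u * ψ u
  map_one' := by simp
  map_mul' u v := by
    simp only [map_mul]
    exact (h v u).mul_mul_mul_comm (φ u) (ψ v)
  continuous_toFun := by fun_prop

variable [IsTopologicalGroup G] in
@[simp]
lemma ContinuousMonoidHom.mulOfCommute_apply (φ ψ : ContinuousMonoidHom A G)
    (h : ∀ u v, Commute (φ u) (ψ v)) (u : A) : φ.mulOfCommute ψ h u = φ u * ψ u :=
  rfl

lemma ContinuousMonoidHom.map_eq_one_of_mem_closure_commutator [IsTopologicalGroup A]
    [T1Space G] (φ : ContinuousMonoidHom A G) (hφ : ∀ u v, Commute (φ u) (φ v)) {f : A}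
    (hf : f ∈ (commutator A).topologicalClosure) : φ f = 1 := by
  suffices (commutator A).topologicalClosure ≤ φ.toMonoidHom.ker from this hf
  refine Subgroup.topologicalClosure_minimal _ ?_ (isClosed_singleton.preimage φ.continuous)
  rw [commutator_def, Subgroup.commutator_le]
  intro u _ v _
  simp [MonoidHom.mem_ker, commutatorElement_def, (hφ u v).eq]

end Homs

section Profinite

variable {G H : Type} [Group G] [TopologicalSpace G] [IsProfiniteGroup G]
  [Group H] [TopologicalSpace H] [IsProfiniteGroup H]

namespace ZhatModel

variable (Z : ZhatModel)

noncomputable def powHom (a : G) : ContinuousMonoidHom (Multiplicative Z.R) G :=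
  (Z.free G a).exists.choose

lemma powHom_apply (a : G) (l : Z.R) : Z.powHom a (.ofAdd l) = Z.pow a l :=
  rfl

lemma pow_one (a : G) : Z.pow a 1 = a :=
  (Z.free G a).exists.choose_spec

lemma apply_ofAdd_eq_pow {a : G} (ψ : ContinuousMonoidHom (Multiplicative Z.R) G)
    (hψ : ψ (.ofAdd 1) = a) (l : Z.R) : ψ (.ofAdd l) = Z.pow a l := by
  rw [(Z.free G a).unique hψ (Z.free G a).exists.choose_spec]
  rfl

lemma map_pow (ψ : ContinuousMonoidHom G H) (a : G) (l : Z.R) :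
    ψ (Z.pow a l) = Z.pow (ψ a) l :=
  Z.apply_ofAdd_eq_pow (ψ.comp (Z.powHom a)) (congrArg ψ (Z.pow_one a)) l

variable {Z} in
lemma commute_pow {g a : G} (h : Commute g a) (l : Z.R) : Commute g (Z.pow a l) := by
  have := Z.map_pow (.conj g) a l
  simp only [ContinuousMonoidHom.conj_apply, h.eq, mul_inv_cancel_right] at this
  exact mul_inv_eq_iff_eq_mul.mp this

variable {Z} in
lemma mul_pow_of_commute {a b : G} (h : Commute a b) (l : Z.R) :
    Z.pow (a * b) l = Z.pow a l * Z.pow b l := by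
  have hcomm : ∀ u v, Commute (Z.powHom a u) (Z.powHom b v) := fun u v =>
    commute_pow (commute_pow h.symm _).symm _
  refine (Z.apply_ofAdd_eq_pow ((Z.powHom a).mulOfCommute (Z.powHom b) hcomm) ?_ l).symm
  simp only [ContinuousMonoidHom.mulOfCommute_apply, powHom_apply, pow_one]

end ZhatModel

namespace F2Model

variable (F2 : F2Model)

noncomputable def evalHom (a b : G) : ContinuousMonoidHom F2.F G :=
  (F2.free G a b).exists.choose

@[simp]
lemma evalHom_x (a b : G) : F2.evalHom a b F2.x = a :=
  (F2.free G a b).exists.choose_spec.1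

@[simp]
lemma evalHom_y (a b : G) : F2.evalHom a b F2.y = b :=
  (F2.free G a b).exists.choose_spec.2

lemma apply_eq_eval {a b : G} (ψ : ContinuousMonoidHom F2.F G) (hx : ψ F2.x = a)
    (hy : ψ F2.y = b) (f : F2.F) : ψ f = F2.eval f a b := by
  rw [(F2.free G a b).unique ⟨hx, hy⟩ (F2.free G a b).exists.choose_spec]
  rfl

lemma map_eval (ψ : ContinuousMonoidHom G H) (f : F2.F) (a b : G) :
    ψ (F2.eval f a b) = F2.eval f (ψ a) (ψ b) :=
  F2.apply_eq_eval (ψ.comp (F2.evalHom a b)) (congrArg ψ (F2.evalHom_x a b))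
    (congrArg ψ (F2.evalHom_y a b)) f

variable {F2}

lemma commute_eval {c a b : G} (ha : Commute c a) (hb : Commute c b) (f : F2.F) :
    Commute c (F2.eval f a b) := by
  have := F2.map_eval (.conj c) f a b
  simp only [ContinuousMonoidHom.conj_apply, ha.eq, hb.eq, mul_inv_cancel_right] at this
  exact mul_inv_eq_iff_eq_mul.mp this

lemma commute_eval_eval {a b : G} (h : Commute a b) (u v : F2.F) :
    Commute (F2.eval u a b) (F2.eval v a b) :=
  commute_eval (commute_eval (.refl a) h u).symm (commute_eval h.symm (.refl b) u).symm v

lemma eval_mul_mul_of_commute {a b a' b' : G} (haa : Commute a a') (hab : Commute a b')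
    (hba : Commute b a') (hbb : Commute b b') (f : F2.F) :
    F2.eval f (a * a') (b * b') = F2.eval f a b * F2.eval f a' b' := by
  have hcomm : ∀ u v, Commute (F2.evalHom a b u) (F2.evalHom a' b' v) := fun u v =>
    commute_eval (commute_eval haa.symm hba.symm u).symm
      (commute_eval hab.symm hbb.symm u).symm v
  refine (F2.apply_eq_eval ((F2.evalHom a b).mulOfCommute (F2.evalHom a' b') hcomm) ?_ ?_ f).symm
  all_goals simp

lemma eval_eq_one_of_commute {f : F2.F} (hf : f ∈ (commutator F2.F).topologicalClosure)
    {a b : G} (h : Commute a b) : F2.eval f a b = 1 :=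
  (F2.evalHom a b).map_eq_one_of_mem_closure_commutator (commute_eval_eval h) hf

lemma eval_mul_left_of_commute {f : F2.F} (hf : f ∈ (commutator F2.F).topologicalClosure)
    {a b c : G} (ha : Commute c a) (hb : Commute c b) :
    F2.eval f (a * c) b = F2.eval f a b := by
  simpa [eval_eq_one_of_commute hf (Commute.one_right c)] using
    eval_mul_mul_of_commute ha.symm (Commute.one_right a) hb.symm (Commute.one_right b) f

lemma eval_mul_right_of_commute {f : F2.F} (hf : f ∈ (commutator F2.F).topologicalClosure)
    {a b c : G} (ha : Commute c a) (hb : Commute c b) :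
    F2.eval f a (b * c) = F2.eval f a b := by
  simpa [eval_eq_one_of_commute hf (Commute.one_left c)] using
    eval_mul_mul_of_commute (Commute.one_right a) ha.symm (Commute.one_right b) hb.symm f

end F2Model

lemma IsGT.hexagon {Z : ZhatModel} {F2 : F2Model} {l : Z.R} {f : F2.F} (hGT : IsGT Z F2 l f)
    {m : Z.R} (hm : l - 1 = 2 * m) (a b : G) :
    F2.eval f (a * b)⁻¹ a * Z.pow (a * b)⁻¹ m * F2.eval f b (a * b)⁻¹ * Z.pow b m *
      F2.eval f a b * Z.pow a m = 1 := by
  obtain ⟨-, -, -, -, hII, -⟩ := hGT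
  simpa only [map_mul, map_inv, map_one, F2.map_eval, Z.map_pow, F2.evalHom_x,
    F2.evalHom_y] using congrArg (F2.evalHom a b) (hII m hm)

end Profinite

theorem generalized_relation_II_general
    (Z : ZhatModel) (F2 : F2Model) (l : Z.R) (f : F2.F) (hGT : IsGT Z F2 l f)
    (m : Z.R) (hm : l - 1 = 2 * m)
    (G : Type) [Group G] [TopologicalSpace G] [IsProfiniteGroup G]
    (x y z : G)
    (hx : Commute (x * y * z) x) (hy : Commute (x * y * z) y) :
    F2.eval f x y * Z.pow x m * F2.eval f z x * Z.pow z m *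
        F2.eval f y z * Z.pow y m =
      Z.pow (x * y * z) m := by
  have hexagon := hGT.hexagon hm x y
  obtain ⟨-, -, hf, -⟩ := hGT
  set c := x * y * z
  set w := (x * y)⁻¹
  have hcw : Commute c w := (hx.mul_right hy).inv_right
  have hz : z = w * c := by simp only [w, c]; group
  rw [hz, F2Model.eval_mul_left_of_commute hf hcw hx, F2Model.eval_mul_right_of_commute hf hy hcw,
    ZhatModel.mul_pow_of_commute hcw.symm]
  have hc : Commute (Z.pow c m) (F2.eval f y w * Z.pow y m) :=
    (ZhatModel.commute_pow
      ((F2Model.commute_eval hy hcw f).mul_right (ZhatModel.commute_pow hy m)).symm m).symm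
  have hcyclic : F2.eval f x y * Z.pow x m * (F2.eval f w x * Z.pow w m *
      (F2.eval f y w * Z.pow y m)) = 1 :=
    mul_eq_one_comm.mp (by simpa only [mul_assoc] using hexagon)
  calc _ = F2.eval f x y * Z.pow x m * (F2.eval f w x * Z.pow w m *
        (F2.eval f y w * Z.pow y m)) * Z.pow c m := by simp only [mul_assoc, hc.eq]
    _ = Z.pow c m := by rw [hcyclic, one_mul]

/-- The generalized hexagon relation (II): if `F = (λ, f) ∈ GT`, `m = (λ-1)/2`, and
`x, y, z` are elements of a profinite group `G` such that `xyz` commutes with each of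
`x`, `y` and `z`, then `f(x,y) x^m f(z,x) z^m f(y,z) y^m = (xyz)^m`. -/
theorem generalized_relation_II
    (Z : ZhatModel) (F2 : F2Model) (l : Z.R) (f : F2.F) (hGT : IsGT Z F2 l f)
    (m : Z.R) (hm : l - 1 = 2 * m)
    (G : Type) [Group G] [TopologicalSpace G] [IsProfiniteGroup G]
    (x y z : G)
    (hx : Commute (x * y * z) x) (hy : Commute (x * y * z) y)
    (hz : Commute (x * y * z) z) :
    F2.eval f x y * Z.pow x m * F2.eval f z x * Z.pow z m *
        F2.eval f y z * Z.pow y m =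
      Z.pow (x * y * z) m :=
  generalized_relation_II_general Z F2 l f hGT m hm G x y z hx hy
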